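/- Let x, y, z be distinct points in hyperbolic n-space, x' and y' the midpoints of the geodesics from x to z and y to z respectively. Then dist(x', y') = (1/2) · dist(x, y) if and only if the angle ∠xzy is 0 or π. -/

import Mathlib

open Real

/-- Inverse hyperbolic cosine. -/
noncomputable def arcosh (x : ℝ) : ℝ := Real.log (x + Real.sqrt (x ^ 2 - 1))

/-- A point of hyperbolic `n`-space in the Poincaré ball model. -/
abbrev HypSpace (n : ℕ) := {p : EuclideanSpace ℝ (Fin n) // ‖p‖ < 1}

/-- The hyperbolic distance in the Poincaré ball model. -/
noncomputable def hDist {n : ℕ} (x y : HypSpace n) : ℝ :=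
  _root_.arcosh (1 + 2 * ‖(x : EuclideanSpace ℝ (Fin n)) - (y : EuclideanSpace ℝ (Fin n))‖ ^ 2 /
    ((1 - ‖(x : EuclideanSpace ℝ (Fin n))‖ ^ 2) * (1 - ‖(y : EuclideanSpace ℝ (Fin n))‖ ^ 2)))

/-- `m` is the midpoint of the geodesic segment from `p` to `q`:  it lies on the segment
(distances add up) and divides it into two equal halves. -/
def IsHypMidpoint {n : ℕ} (p m q : HypSpace n) : Prop :=
  hDist p m = hDist p q / 2 ∧ hDist m q = hDist p q / 2


/-- The hyperbolic angle `∠ x z y` at the vertex `z`, defined via the hyperbolic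
law of cosines. -/
noncomputable def hAngle {n : ℕ} (x z y : HypSpace n) : ℝ :=
  Real.arccos ((Real.cosh (hDist z x) * Real.cosh (hDist z y) - Real.cosh (hDist x y)) /
    (Real.sinh (hDist z x) * Real.sinh (hDist z y)))

/-!
In the hyperboloid model, `cosh` of the distance is the Minkowski product of the lifted points,
and the midpoint of `p` and `q` lifts to `(P + Q) / (2 cosh (d(p, q) / 2))`. With
`a = d(x, z)`, `b = d(y, z)`, `c = d(x, y)` this gives
`4 cosh (a/2) cosh (b/2) cosh d(x', y') = cosh a + cosh b + cosh c + 1`, and the difference of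
the two sides at `d(x', y') = c/2` factors as
`2 (cosh (c/2) - cosh ((a+b)/2)) (cosh (c/2) - cosh ((a-b)/2))`. So `d(x', y') = c/2` exactly
when `c = a + b` or `c = |a - b|`, the two equality cases of the triangle inequality, which by
the law of cosines are the angles `π` and `0`.
-/

namespace Real

theorem cosh_eq_two_mul_cosh_half_sq_sub_one (x : ℝ) : cosh x = 2 * cosh (x / 2) ^ 2 - 1 := by
  have h := cosh_two_mul (x / 2)
  rw [mul_div_cancel₀ x two_ne_zero] at h
  linarith [cosh_sq (x / 2)]

theorem cosh_eq_cosh_iff {x y : ℝ} : cosh x = cosh y ↔ |x| = |y| := by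
  rw [le_antisymm_iff, le_antisymm_iff, cosh_le_cosh, cosh_le_cosh]

theorem four_mul_cosh_half_mul_cosh_half_mul_cosh_half_eq_iff {a b c : ℝ} (ha : 0 ≤ a)
    (hb : 0 ≤ b) (hc : 0 ≤ c) :
    4 * cosh (a / 2) * cosh (b / 2) * cosh (c / 2) = cosh c + cosh a + cosh b + 1 ↔
      c = a + b ∨ c = |a - b| := by
  have hfactor : cosh c + cosh a + cosh b + 1 - 4 * cosh (a / 2) * cosh (b / 2) * cosh (c / 2) =
      2 * ((cosh (c / 2) - cosh ((a + b) / 2)) * (cosh (c / 2) - cosh ((a - b) / 2))) := by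
    rw [cosh_eq_two_mul_cosh_half_sq_sub_one a, cosh_eq_two_mul_cosh_half_sq_sub_one b,
      cosh_eq_two_mul_cosh_half_sq_sub_one c, add_div, sub_div, cosh_add, cosh_sub]
    linear_combination (2 - 2 * cosh (b / 2) ^ 2) * cosh_sq (a / 2) -
      2 * sinh (a / 2) ^ 2 * cosh_sq (b / 2)
  rw [eq_comm, ← sub_eq_zero, hfactor, mul_eq_zero, mul_eq_zero, sub_eq_zero, sub_eq_zero,
    cosh_eq_cosh_iff, cosh_eq_cosh_iff]
  simp only [two_ne_zero, false_or, abs_div, abs_two, div_left_inj' (two_ne_zero' ℝ),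
    abs_of_nonneg hc, abs_of_nonneg (add_nonneg ha hb)]

end Real

section Minkowski

variable {F : Type*} [NormedAddCommGroup F] [InnerProductSpace ℝ F]

noncomputable def minkowski : LinearMap.BilinForm ℝ (ℝ × F) :=
  (LinearMap.mul ℝ ℝ).compl₁₂ (LinearMap.fst ℝ ℝ F) (LinearMap.fst ℝ ℝ F) -
    (innerₗ F).compl₁₂ (LinearMap.snd ℝ ℝ F) (LinearMap.snd ℝ ℝ F)

theorem minkowski_apply (U V : ℝ × F) : minkowski U V = U.1 * V.1 - inner ℝ U.2 V.2 := rfl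

theorem minkowski_comm (U V : ℝ × F) : minkowski U V = minkowski V U := by
  simp only [minkowski_apply, mul_comm, real_inner_comm]

theorem minkowski_self (U : ℝ × F) : minkowski U U = U.1 ^ 2 - ‖U.2‖ ^ 2 := by
  rw [minkowski_apply, real_inner_self_eq_norm_sq]; ring

theorem fst_sq_mul_minkowski_self_le {Z W : ℝ × F} (h : minkowski Z W = 0) :
    Z.1 ^ 2 * minkowski W W ≤ -minkowski Z Z * ‖W.2‖ ^ 2 := by
  have hcs : |inner ℝ Z.2 W.2| ≤ ‖Z.2‖ * ‖W.2‖ := abs_real_inner_le_norm _ _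
  have hZW : Z.1 * W.1 = inner ℝ Z.2 W.2 := by rw [minkowski_apply] at h; linarith
  have : (Z.1 * W.1) ^ 2 ≤ (‖Z.2‖ * ‖W.2‖) ^ 2 := by
    rw [hZW, ← sq_abs]; gcongr
  rw [minkowski_self, minkowski_self]
  linarith

theorem minkowski_self_nonpos {Z W : ℝ × F} (hZ : 0 < minkowski Z Z) (h : minkowski Z W = 0) :
    minkowski W W ≤ 0 := by
  have := fst_sq_mul_minkowski_self_le h
  have hZ1 : 0 < Z.1 ^ 2 := by rw [minkowski_self] at hZ; linarith [sq_nonneg ‖Z.2‖]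
  nlinarith [sq_nonneg ‖W.2‖]

theorem eq_zero_of_minkowski_self_eq_zero {Z W : ℝ × F} (hZ : 0 < minkowski Z Z)
    (h : minkowski Z W = 0) (hW : minkowski W W = 0) : W = 0 := by
  have := fst_sq_mul_minkowski_self_le h
  rw [hW, mul_zero] at this
  have h2 : W.2 = 0 := by
    have : ‖W.2‖ ^ 2 = 0 := le_antisymm (by nlinarith) (sq_nonneg _)
    simpa using this
  have h1 : W.1 = 0 := by
    rw [minkowski_self, h2, norm_zero] at hW; simpa using hW
  exact Prod.ext h1 h2

/-- `U - V` is a null vector orthogonal to the timelike vector `U`. -/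
theorem eq_of_minkowski_eq_one {U V : ℝ × F} (hU : minkowski U U = 1) (hV : minkowski V V = 1)
    (hUV : minkowski U V = 1) : U = V := by
  have hVU : minkowski V U = 1 := by rwa [minkowski_comm]
  refine sub_eq_zero.1 (eq_zero_of_minkowski_self_eq_zero (Z := U) (by rw [hU]; norm_num) ?_ ?_)
  · simp only [map_sub, hU, hUV, sub_self]
  · simp only [map_sub, LinearMap.sub_apply, hU, hV, hUV, hVU]; norm_num

theorem sq_minkowski_le {Z U V : ℝ × F} (hZ : 0 < minkowski Z Z) (hU : minkowski Z U = 0)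
    (hV : minkowski Z V = 0) : minkowski U V ^ 2 ≤ minkowski U U * minkowski V V := by
  have hquad : ∀ t : ℝ,
      0 ≤ -minkowski V V * (t * t) + -(2 * minkowski U V) * t + -minkowski U U := by
    intro t
    have := minkowski_self_nonpos hZ (W := U + t • V) (by simp [hU, hV])
    have hVU : minkowski V U = minkowski U V := minkowski_comm V U
    simp only [map_add, map_smul, LinearMap.add_apply, LinearMap.smul_apply, smul_eq_mul,
      hVU] at this
    linarith
  have := discrim_le_zero hquad
  rw [discrim] at this
  linarith

end Minkowski

theorem arcosh_eq_real_arcosh : _root_.arcosh = Real.arcosh := rfl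

namespace HypSpace

variable {n : ℕ}

theorem one_sub_norm_sq_pos (p : HypSpace n) : 0 < 1 - ‖p.1‖ ^ 2 := by
  have := p.2
  nlinarith [norm_nonneg p.1]

/-- The isometry from the Poincaré ball onto the upper sheet of the hyperboloid
`t ^ 2 - ‖v‖ ^ 2 = 1`. -/
noncomputable def toHyperboloid (p : HypSpace n) : ℝ × EuclideanSpace ℝ (Fin n) :=
  ((1 + ‖p.1‖ ^ 2) / (1 - ‖p.1‖ ^ 2), (2 / (1 - ‖p.1‖ ^ 2)) • p.1)

theorem one_le_hDist_arg (p q : HypSpace n) :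
    1 ≤ 1 + 2 * ‖p.1 - q.1‖ ^ 2 / ((1 - ‖p.1‖ ^ 2) * (1 - ‖q.1‖ ^ 2)) := by
  have := one_sub_norm_sq_pos p
  have := one_sub_norm_sq_pos q
  simp only [le_add_iff_nonneg_right]
  positivity

theorem cosh_hDist (p q : HypSpace n) :
    cosh (hDist p q) = minkowski (toHyperboloid p) (toHyperboloid q) := by
  have := one_sub_norm_sq_pos p
  have := one_sub_norm_sq_pos q
  rw [hDist, arcosh_eq_real_arcosh, Real.cosh_arcosh (one_le_hDist_arg p q), minkowski_apply,
    toHyperboloid, toHyperboloid, inner_smul_left, inner_smul_right, norm_sub_sq_real]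
  simp only [conj_trivial]
  field_simp
  ring

theorem hDist_self (p : HypSpace n) : hDist p p = 0 := by
  simp [hDist, arcosh_eq_real_arcosh]

theorem minkowski_toHyperboloid_self (p : HypSpace n) :
    minkowski (toHyperboloid p) (toHyperboloid p) = 1 := by
  rw [← cosh_hDist, hDist_self, cosh_zero]

theorem hDist_comm (p q : HypSpace n) : hDist p q = hDist q p := by
  rw [hDist, hDist, norm_sub_rev, mul_comm (1 - _)]

theorem hDist_nonneg (p q : HypSpace n) : 0 ≤ hDist p q :=
  Real.arcosh_nonneg (one_le_hDist_arg p q)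

theorem hDist_pos {p q : HypSpace n} (hpq : p ≠ q) : 0 < hDist p q := by
  have := one_sub_norm_sq_pos p
  have := one_sub_norm_sq_pos q
  have : p.1 - q.1 ≠ 0 := sub_ne_zero.2 (Subtype.coe_ne_coe.2 hpq)
  refine Real.arcosh_pos (lt_add_of_pos_right _ ?_)
  positivity

theorem toHyperboloid_of_isHypMidpoint {p m q : HypSpace n} (h : IsHypMidpoint p m q) :
    toHyperboloid m =
      (2 * cosh (hDist p q / 2))⁻¹ • (toHyperboloid p + toHyperboloid q) := by
  have hc : 0 < cosh (hDist p q / 2) := cosh_pos _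
  have hpm : minkowski (toHyperboloid m) (toHyperboloid p) = cosh (hDist p q / 2) := by
    rw [← cosh_hDist, hDist_comm, h.1]
  have hmq : minkowski (toHyperboloid m) (toHyperboloid q) = cosh (hDist p q / 2) := by
    rw [← cosh_hDist, h.2]
  have hpq : minkowski (toHyperboloid p) (toHyperboloid q) = 2 * cosh (hDist p q / 2) ^ 2 - 1 := by
    rw [← cosh_hDist, cosh_eq_two_mul_cosh_half_sq_sub_one]
  have hqp := minkowski_comm (toHyperboloid q) (toHyperboloid p)
  apply eq_of_minkowski_eq_one (minkowski_toHyperboloid_self m)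
  · simp only [map_smul, map_add, LinearMap.smul_apply, LinearMap.add_apply, smul_eq_mul,
      minkowski_toHyperboloid_self, hpq, hqp]
    field_simp
    ring
  · simp only [map_smul, map_add, smul_eq_mul, hpm, hmq]
    field_simp
    ring

theorem sq_cosh_hDist_sub_le (x y z : HypSpace n) :
    (cosh (hDist x y) - cosh (hDist z x) * cosh (hDist z y)) ^ 2 ≤
      (sinh (hDist z x) * sinh (hDist z y)) ^ 2 := by
  set X := toHyperboloid x
  set Y := toHyperboloid y
  set Z := toHyperboloid z
  have hZ : minkowski Z Z = 1 := minkowski_toHyperboloid_self z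
  have hX : minkowski X X = 1 := minkowski_toHyperboloid_self x
  have hY : minkowski Y Y = 1 := minkowski_toHyperboloid_self y
  have hZX : minkowski Z X = cosh (hDist z x) := (cosh_hDist z x).symm
  have hZY : minkowski Z Y = cosh (hDist z y) := (cosh_hDist z y).symm
  have hXY : minkowski X Y = cosh (hDist x y) := (cosh_hDist x y).symm
  have hXZ : minkowski X Z = cosh (hDist z x) := by rw [minkowski_comm, hZX]
  have hYZ : minkowski Y Z = cosh (hDist z y) := by rw [minkowski_comm, hZY]
  -- project `X` and `Y` onto the orthogonal complement of `Z`
  have hcs := sq_minkowski_le (Z := Z) (U := X - cosh (hDist z x) • Z)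
    (V := Y - cosh (hDist z y) • Z) (by rw [hZ]; norm_num)
    (by simp only [map_sub, map_smul, smul_eq_mul, hZ, hZX]; ring)
    (by simp only [map_sub, map_smul, smul_eq_mul, hZ, hZY]; ring)
  simp only [map_sub, map_smul, LinearMap.sub_apply, LinearMap.smul_apply, smul_eq_mul,
    hX, hY, hZ, hZX, hZY, hXY, hXZ, hYZ] at hcs
  rw [mul_pow, sinh_sq, sinh_sq]
  linarith

theorem hDist_mem_Icc (x y z : HypSpace n) :
    hDist x y ∈ Set.Icc |hDist z x - hDist z y| (hDist z x + hDist z y) := by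
  have hsinh : 0 ≤ sinh (hDist z x) * sinh (hDist z y) :=
    mul_nonneg (sinh_nonneg_iff.2 (hDist_nonneg z x)) (sinh_nonneg_iff.2 (hDist_nonneg z y))
  obtain ⟨hlow, hup⟩ := abs_le_of_sq_le_sq' (sq_cosh_hDist_sub_le x y z) hsinh
  have hc := abs_of_nonneg (hDist_nonneg x y)
  have hab := abs_of_nonneg (add_nonneg (hDist_nonneg z x) (hDist_nonneg z y))
  constructor
  · rw [← hc, ← cosh_le_cosh, cosh_sub]
    linarith
  · rw [← hc, ← hab, ← cosh_le_cosh, cosh_add]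
    linarith

theorem sinh_hDist_pos {p q : HypSpace n} (hpq : p ≠ q) : 0 < sinh (hDist p q) :=
  sinh_pos_iff.2 (hDist_pos hpq)

theorem hAngle_eq_zero_iff {x y z : HypSpace n} (hxz : x ≠ z) (hyz : y ≠ z) :
    hAngle x z y = 0 ↔ hDist x y ≤ |hDist z x - hDist z y| := by
  have hsinh : 0 < sinh (hDist z x) * sinh (hDist z y) :=
    mul_pos (sinh_hDist_pos hxz.symm) (sinh_hDist_pos hyz.symm)
  rw [hAngle, arccos_eq_zero, one_le_div hsinh, ← abs_of_nonneg (hDist_nonneg x y),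
    ← cosh_le_cosh, cosh_abs, cosh_sub]
  constructor <;> intro h <;> linarith

theorem hAngle_eq_pi_iff {x y z : HypSpace n} (hxz : x ≠ z) (hyz : y ≠ z) :
    hAngle x z y = π ↔ hDist z x + hDist z y ≤ hDist x y := by
  have hsinh : 0 < sinh (hDist z x) * sinh (hDist z y) :=
    mul_pos (sinh_hDist_pos hxz.symm) (sinh_hDist_pos hyz.symm)
  rw [hAngle, arccos_eq_pi, div_le_iff₀ hsinh, ← abs_of_nonneg (hDist_nonneg x y),
    ← abs_of_nonneg (add_nonneg (hDist_nonneg z x) (hDist_nonneg z y)), ← cosh_le_cosh,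
    cosh_abs, cosh_add]
  constructor <;> intro h <;> linarith

theorem cosh_hDist_of_isHypMidpoint {x y z x' y' : HypSpace n} (hx' : IsHypMidpoint x x' z)
    (hy' : IsHypMidpoint y y' z) :
    4 * cosh (hDist x z / 2) * cosh (hDist y z / 2) * cosh (hDist x' y') =
      cosh (hDist x y) + cosh (hDist x z) + cosh (hDist y z) + 1 := by
  have hzy : minkowski (toHyperboloid z) (toHyperboloid y) = cosh (hDist y z) := by
    rw [← cosh_hDist, hDist_comm]
  have := cosh_pos (hDist x z / 2)
  have := cosh_pos (hDist y z / 2)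
  rw [cosh_hDist, toHyperboloid_of_isHypMidpoint hx', toHyperboloid_of_isHypMidpoint hy']
  simp only [map_smul, map_add, LinearMap.smul_apply, LinearMap.add_apply, smul_eq_mul,
    ← cosh_hDist, hzy, hDist_self, cosh_zero]
  field_simp
  ring

theorem hDist_midpoints_eq_half_iff {x y z x' y' : HypSpace n} (hx' : IsHypMidpoint x x' z)
    (hy' : IsHypMidpoint y y' z) :
    hDist x' y' = hDist x y / 2 ↔
      hDist x y = hDist x z + hDist y z ∨ hDist x y = |hDist x z - hDist y z| := by
  have := cosh_pos (hDist x z / 2)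
  have := cosh_pos (hDist y z / 2)
  rw [← four_mul_cosh_half_mul_cosh_half_mul_cosh_half_eq_iff (hDist_nonneg x z)
    (hDist_nonneg y z) (hDist_nonneg x y), ← cosh_hDist_of_isHypMidpoint hx' hy',
    mul_right_inj' (by positivity),
    cosh_injOn.eq_iff (div_nonneg (hDist_nonneg x y) zero_le_two) (hDist_nonneg x' y'), eq_comm]

end HypSpace

open HypSpace

theorem midpoint_dist_eq_half_iff_general {n : ℕ} (x y z x' y' : HypSpace n)
    (hxz : x ≠ z) (hyz : y ≠ z)
    (hx' : IsHypMidpoint x x' z) (hy' : IsHypMidpoint y y' z) :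
    hDist x' y' = (1 / 2) * hDist x y ↔ (hAngle x z y = 0 ∨ hAngle x z y = Real.pi) := by
  obtain ⟨hlow, hup⟩ := hDist_mem_Icc x y z
  rw [hDist_comm z x, hDist_comm z y] at hlow hup
  rw [one_div_mul_eq_div, hDist_midpoints_eq_half_iff hx' hy', hAngle_eq_zero_iff hxz hyz,
    hAngle_eq_pi_iff hxz hyz, hDist_comm z x, hDist_comm z y]
  constructor
  · rintro (h | h)
    · exact Or.inr h.ge
    · exact Or.inl h.le
  · rintro (h | h)
    · exact Or.inr (le_antisymm h hlow)
    · exact Or.inl (le_antisymm hup h)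

theorem midpoint_dist_eq_half_iff {n : ℕ} (x y z x' y' : HypSpace n)
    (hxy : x ≠ y) (hxz : x ≠ z) (hyz : y ≠ z)
    (hx' : IsHypMidpoint x x' z) (hy' : IsHypMidpoint y y' z) :
    hDist x' y' = (1 / 2) * hDist x y ↔ (hAngle x z y = 0 ∨ hAngle x z y = Real.pi) :=
  midpoint_dist_eq_half_iff_general x y z x' y' hxz hyz hx' hy'
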